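/- For all integers n ≥ 1 and k, j ≥ 0, the number of set partitions of [2(n+k+j)+2] with no singleton blocks such that, in the standard representation, vertices 1,…,n+k are openers, vertex n+k+1 is a transitory, the next k vertices are closers, the next j vertices are openers, the following vertex is a transitory, and the last n+j vertices are closers, equals n! · ( binom(n+k, k) · k! · k + binom(n+k, k+1) · (k+1)! ) · ( binom(n+j, j) · j! · j + binom(n+j, j+1) · (j+1)! ). -/

import Mathlib

/-- The set of arc endpoints of a collection of arcs. -/
def Endpoints (M : Finset (ℕ × ℕ)) : Finset ℕ := M.image Prod.fst ∪ M.image Prod.snd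

/-- A partial matching of `[N] = {1,…,N}`: a set of arcs `(i,j)` with
`1 ≤ i < j ≤ N` whose entries are pairwise disjoint. -/
def IsPartialMatching (N : ℕ) (M : Finset (ℕ × ℕ)) : Prop :=
  (∀ p ∈ M, 1 ≤ p.1 ∧ p.1 < p.2 ∧ p.2 ≤ N) ∧
  (∀ p ∈ M, ∀ q ∈ M, p ≠ q → p.1 ≠ q.1 ∧ p.1 ≠ q.2 ∧ p.2 ≠ q.1 ∧ p.2 ≠ q.2)

/-- A perfect matching of `[N]`: a partial matching whose arcs cover `{1,…,N}`. -/
def IsPerfectMatching (N : ℕ) (M : Finset (ℕ × ℕ)) : Prop :=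
  IsPartialMatching N M ∧ Endpoints M = Finset.Icc 1 N

/-- `A` is a `k`-crossing of `M`: a `k`-element subset of arcs listable as
`(i₁,j₁),…,(i_k,j_k)` with `i₁ < ⋯ < i_k < j₁ < ⋯ < j_k`. -/
def IsCrossing (k : ℕ) (M A : Finset (ℕ × ℕ)) : Prop :=
  A ⊆ M ∧ A.card = k ∧ (∀ p ∈ A, ∀ q ∈ A, p.1 < q.1 → p.2 < q.2) ∧
    (∀ p ∈ A, ∀ q ∈ A, p.1 < q.2)

/-- `A` is a `k`-nesting of `M`: a `k`-element subset of arcs listable as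
`(i₁,j₁),…,(i_k,j_k)` with `i₁ < ⋯ < i_k < j_k < ⋯ < j₁`. -/
def IsNesting (k : ℕ) (M A : Finset (ℕ × ℕ)) : Prop :=
  A ⊆ M ∧ A.card = k ∧ (∀ p ∈ A, ∀ q ∈ A, p.1 < q.1 → q.2 < p.2)

/-- `crNum k M` : the number of `k`-crossings of `M`. -/
noncomputable def crNum (k : ℕ) (M : Finset (ℕ × ℕ)) : ℕ :=
  Nat.card {A : Finset (ℕ × ℕ) // IsCrossing k M A}

/-- `neNum k M` : the number of `k`-nestings of `M`. -/
noncomputable def neNum (k : ℕ) (M : Finset (ℕ × ℕ)) : ℕ :=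
  Nat.card {A : Finset (ℕ × ℕ) // IsNesting k M A}

/-- The four types of vertices in the standard representation of a set partition. -/
inductive VType
  | opener | closer | transitory | fixedpt
deriving DecidableEq

/-- The arc set of the standard representation of a set partition `P` of `{1,…,N}`:
arcs join consecutive elements of a block. -/
def spArcs {N : ℕ} (P : Finpartition (Finset.Icc (1 : ℕ) N)) : Finset (ℕ × ℕ) :=
  ((Finset.Icc (1 : ℕ) N) ×ˢ (Finset.Icc (1 : ℕ) N)).filter fun q =>
    q.1 < q.2 ∧ ∃ B ∈ P.parts, q.1 ∈ B ∧ q.2 ∈ B ∧ ∀ x ∈ B, ¬(q.1 < x ∧ x < q.2)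

/-- The type of the vertex `i` in the standard representation of `P`. -/
def vtype {N : ℕ} (P : Finpartition (Finset.Icc (1 : ℕ) N)) (i : ℕ) : VType :=
  if i ∈ (spArcs P).image Prod.fst then
    (if i ∈ (spArcs P).image Prod.snd then VType.transitory else VType.opener)
  else
    (if i ∈ (spArcs P).image Prod.snd then VType.closer else VType.fixedpt)

/-- The (1-based) rank of `i` inside the finite set `E`. -/
def rankIn (E : Finset ℕ) (i : ℕ) : ℕ := (E.filter fun x => x ≤ i).card
/-!
A partition is determined by its right-neighbour map `g`, which sends each left endpoint `x` of
an arc (an opener or transitory) to the next element `g x > x` of its block. This is an increasing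
bijection from the set `L` of left endpoints onto the set `R` of right endpoints (closers and
transitories), and conversely every increasing bijection `L → R` comes from exactly one partition:
its blocks are the `g`-orbits of the vertices outside `R`. So the partitions with a prescribed
type sequence are counted by the increasing bijections `L → R`. Assigning the images from the
largest element of `L` down, `x ∈ L` has `#{r ∈ R | x < r} - #{y ∈ L | x < y}` choices. For the
type sequence at hand these numbers are `1, …, n + k`, then `n + k` at the first transitory,
`n + 1, …, n + j`, and `n + j` at the second one.
-/

open Finset Function
open scoped Nat

/-- `vtype P = vtypeOf (left endpoints of arcs) (right endpoints of arcs)` holds by `rfl`. -/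
def vtypeOf (L R : Finset ℕ) (i : ℕ) : VType :=
  if i ∈ L then (if i ∈ R then VType.transitory else VType.opener)
  else (if i ∈ R then VType.closer else VType.fixedpt)

lemma vtypeOf_eq_vtypeOf_iff {L R L' R' : Finset ℕ} {i : ℕ} :
    vtypeOf L R i = vtypeOf L' R' i ↔ (i ∈ L ↔ i ∈ L') ∧ (i ∈ R ↔ i ∈ R') := by
  unfold vtypeOf
  split_ifs <;> simp_all

section Arcs

variable {N : ℕ} {P : Finpartition (Icc 1 N)} {a a' b b' : ℕ}

lemma mem_spArcs :
    (a, b) ∈ spArcs P ↔ (a ∈ Icc 1 N ∧ b ∈ Icc 1 N) ∧ a < b ∧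
      ∃ B ∈ P.parts, a ∈ B ∧ b ∈ B ∧ ∀ x ∈ B, ¬(a < x ∧ x < b) := by
  rw [spArcs, mem_filter, mem_product]

lemma image_fst_spArcs_subset (P : Finpartition (Icc 1 N)) :
    (spArcs P).image Prod.fst ⊆ Icc 1 N := by
  intro a ha
  obtain ⟨⟨a, b⟩, h, rfl⟩ := mem_image.1 ha
  exact (mem_spArcs.1 h).1.1

lemma image_snd_spArcs_subset (P : Finpartition (Icc 1 N)) :
    (spArcs P).image Prod.snd ⊆ Icc 1 N := by
  intro b hb
  obtain ⟨⟨a, b⟩, h, rfl⟩ := mem_image.1 hb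
  exact (mem_spArcs.1 h).1.2

theorem forall_vtype_eq_vtypeOf_iff {L R : Finset ℕ} (hL : L ⊆ Icc 1 N) (hR : R ⊆ Icc 1 N)
    (P : Finpartition (Icc 1 N)) :
    (∀ i ∈ Icc 1 N, vtype P i = vtypeOf L R i) ↔
      (spArcs P).image Prod.fst = L ∧ (spArcs P).image Prod.snd = R := by
  refine ⟨fun h => ?_, fun ⟨hfst, hsnd⟩ i _ => hfst ▸ hsnd ▸ rfl⟩
  have hmem : ∀ i, (i ∈ (spArcs P).image Prod.fst ↔ i ∈ L) ∧
      (i ∈ (spArcs P).image Prod.snd ↔ i ∈ R) := by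
    intro i
    by_cases hi : i ∈ Icc 1 N
    · exact vtypeOf_eq_vtypeOf_iff.1 (h i hi)
    · exact ⟨iff_of_false (fun h => hi (image_fst_spArcs_subset P h)) (fun h => hi (hL h)),
        iff_of_false (fun h => hi (image_snd_spArcs_subset P h)) (fun h => hi (hR h))⟩
  exact ⟨ext fun i => (hmem i).1, ext fun i => (hmem i).2⟩

lemma eq_of_mem_spArcs_of_mem_spArcs_left (h : (a, b) ∈ spArcs P) (h' : (a, b') ∈ spArcs P) :
    b = b' := by
  obtain ⟨-, hab, B, hB, haB, hbB, hbtw⟩ := mem_spArcs.1 h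
  obtain ⟨-, hab', B', hB', haB', hbB', hbtw'⟩ := mem_spArcs.1 h'
  obtain rfl := P.eq_of_mem_parts hB hB' haB haB'
  by_contra hne
  rcases Nat.lt_or_gt_of_ne hne with hlt | hlt
  · exact hbtw' b hbB ⟨hab, hlt⟩
  · exact hbtw b' hbB' ⟨hab', hlt⟩

lemma eq_of_mem_spArcs_of_mem_spArcs_right (h : (a, b) ∈ spArcs P) (h' : (a', b) ∈ spArcs P) :
    a = a' := by
  obtain ⟨-, hab, B, hB, haB, hbB, hbtw⟩ := mem_spArcs.1 h
  obtain ⟨-, hab', B', hB', haB', hbB', hbtw'⟩ := mem_spArcs.1 h'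
  obtain rfl := P.eq_of_mem_parts hB hB' hbB hbB'
  by_contra hne
  rcases Nat.lt_or_gt_of_ne hne with hlt | hlt
  · exact hbtw a' haB' ⟨hlt, hab'⟩
  · exact hbtw' a haB ⟨hlt, hab⟩

lemma mem_part_iff_of_mem_spArcs {B : Finset ℕ} (hB : B ∈ P.parts) (h : (a, b) ∈ spArcs P) :
    a ∈ B ↔ b ∈ B := by
  obtain ⟨-, -, B', hB', haB', hbB', -⟩ := mem_spArcs.1 h
  constructor <;> intro hmem
  · rwa [P.eq_of_mem_parts hB hB' hmem haB']
  · rwa [P.eq_of_mem_parts hB hB' hmem hbB']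

/-- The largest element of `B` below `y` is joined to `y` by an arc. -/
lemma exists_mem_spArcs_of_lt {B : Finset ℕ} (hB : B ∈ P.parts) {y z : ℕ} (hy : y ∈ B)
    (hz : z ∈ B) (hzy : z < y) : ∃ x ∈ B, (x, y) ∈ spArcs P := by
  have hne : (B.filter (· < y)).Nonempty := ⟨z, mem_filter.2 ⟨hz, hzy⟩⟩
  obtain ⟨hxB, hxy⟩ := mem_filter.1 ((B.filter (· < y)).max'_mem hne)
  refine ⟨_, hxB, mem_spArcs.2 ⟨⟨P.le hB hxB, P.le hB hy⟩, hxy, B, hB, hxB, hy, ?_⟩⟩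
  rintro w hw ⟨hxw, hwy⟩
  exact (le_max' _ w (mem_filter.2 ⟨hw, hwy⟩)).not_gt hxw

open Classical in
/-- The right neighbour of `x` in its block, and `0` if there is none. -/
noncomputable def arcSucc (P : Finpartition (Icc 1 N)) (x : ℕ) : ℕ :=
  if h : ∃ b, (x, b) ∈ spArcs P then h.choose else 0

lemma arcSucc_eq (h : (a, b) ∈ spArcs P) : arcSucc P a = b := by
  have he : ∃ b, (a, b) ∈ spArcs P := ⟨b, h⟩
  rw [arcSucc, dif_pos he]
  exact eq_of_mem_spArcs_of_mem_spArcs_left he.choose_spec h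

lemma mem_image_fst_spArcs : a ∈ (spArcs P).image Prod.fst ↔ ∃ b, (a, b) ∈ spArcs P := by
  simp

lemma arcSucc_eq_zero (h : a ∉ (spArcs P).image Prod.fst) : arcSucc P a = 0 := by
  rw [arcSucc, dif_neg (mem_image_fst_spArcs.not.1 h)]

lemma mem_spArcs_iff_arcSucc :
    (a, b) ∈ spArcs P ↔ a ∈ (spArcs P).image Prod.fst ∧ arcSucc P a = b := by
  refine ⟨fun h => ⟨mem_image_fst_spArcs.2 ⟨b, h⟩, arcSucc_eq h⟩, ?_⟩
  rintro ⟨ha, rfl⟩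
  obtain ⟨b, hb⟩ := mem_image_fst_spArcs.1 ha
  rwa [arcSucc_eq hb]

end Arcs

/-- The arcs `(x, g x)`, `x ∈ L`; the junk value `0` off `L` makes `g` unique. -/
def IsArcMap (L R : Finset ℕ) (g : ℕ → ℕ) : Prop :=
  Set.BijOn g L R ∧ (∀ x ∈ L, x < g x) ∧ ∀ x ∉ L, g x = 0

lemma isArcMap_arcSucc {N : ℕ} (P : Finpartition (Icc 1 N)) :
    IsArcMap ((spArcs P).image Prod.fst) ((spArcs P).image Prod.snd) (arcSucc P) := by
  have harc : ∀ a ∈ (spArcs P).image Prod.fst, (a, arcSucc P a) ∈ spArcs P :=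
    fun a ha => mem_spArcs_iff_arcSucc.2 ⟨ha, rfl⟩
  refine ⟨⟨fun a ha => mem_image_of_mem Prod.snd (harc a ha), ?_, ?_⟩, ?_, fun a ha => ?_⟩
  · intro a ha a' ha' h
    exact eq_of_mem_spArcs_of_mem_spArcs_right (harc a ha) (h ▸ harc a' ha')
  · intro b hb
    obtain ⟨⟨a, b⟩, h, rfl⟩ := mem_image.1 hb
    exact ⟨a, mem_image_of_mem Prod.fst h, arcSucc_eq h⟩
  · exact fun a ha => (mem_spArcs.1 (harc a ha)).2.1
  · exact arcSucc_eq_zero ha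

namespace IsArcMap

variable {L R : Finset ℕ} {g : ℕ → ℕ} {o o' m m' p q : ℕ}

lemma iterate_mem_of_succ_ne_zero (hg : IsArcMap L R g) (h : g^[m + 1] o ≠ 0) : g^[m] o ∈ L := by
  by_contra hm
  exact h (by rw [iterate_succ_apply']; exact hg.2.2 _ hm)

lemma iterate_mem_of_lt (hg : IsArcMap L R g) (h0 : 0 ∉ L) (hq : g^[q] o ≠ 0) (hpq : p < q) :
    g^[p] o ∈ L := by
  induction q with
  | zero => omega
  | succ q ih =>
    have hm := hg.iterate_mem_of_succ_ne_zero hq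
    rcases Nat.lt_succ_iff_lt_or_eq.1 hpq with hpq | rfl
    · exact ih (ne_of_mem_of_not_mem hm h0) hpq
    · exact hm

lemma iterate_lt_iterate (hg : IsArcMap L R g) (h0 : 0 ∉ L) (hq : g^[q] o ≠ 0) (hpq : p < q) :
    g^[p] o < g^[q] o := by
  induction q with
  | zero => omega
  | succ q ih =>
    have hm := hg.iterate_mem_of_succ_ne_zero hq
    have hstep : g^[q] o < g^[q + 1] o := by rw [iterate_succ_apply']; exact hg.2.1 _ hm
    rcases Nat.lt_succ_iff_lt_or_eq.1 hpq with hpq | rfl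
    · exact (ih (ne_of_mem_of_not_mem hm h0) hpq).trans hstep
    · exact hstep

lemma iterate_le_iterate (hg : IsArcMap L R g) (h0 : 0 ∉ L) (hq : g^[q] o ≠ 0) (hpq : p ≤ q) :
    g^[p] o ≤ g^[q] o := by
  rcases hpq.lt_or_eq with hpq | rfl
  · exact (hg.iterate_lt_iterate h0 hq hpq).le
  · exact le_rfl

lemma exists_iterate_eq {N : ℕ} (hg : IsArcMap L R g) (hL : L ⊆ Icc 1 N) {y : ℕ}
    (hy : y ∈ Icc 1 N) : ∃ o ∈ Icc 1 N \ R, ∃ m, g^[m] o = y := by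
  induction y using Nat.strong_induction_on with
  | _ y ih =>
    by_cases hyR : y ∈ R
    · obtain ⟨x, hx, rfl⟩ := hg.1.surjOn hyR
      obtain ⟨o, ho, m, rfl⟩ := ih _ (hg.2.1 x hx) (hL hx)
      exact ⟨o, ho, m + 1, iterate_succ_apply' g m o⟩
    · exact ⟨y, mem_sdiff.2 ⟨hy, hyR⟩, 0, rfl⟩

lemma eq_of_iterate_eq (hg : IsArcMap L R g) (h0 : 0 ∉ L) (ho : o ∉ R) (ho' : o' ∉ R)
    (h : g^[m] o = g^[m'] o') (hne : g^[m] o ≠ 0) : o = o' := by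
  induction m generalizing m' with
  | zero =>
    cases m' with
    | zero => exact h
    | succ m' =>
      rw [iterate_zero_apply, iterate_succ_apply'] at h
      have hm' : g^[m'] o' ∈ L :=
        hg.iterate_mem_of_succ_ne_zero (by rwa [iterate_succ_apply', ← h])
      exact absurd (h ▸ hg.1.mapsTo hm') ho
  | succ m ih =>
    cases m' with
    | zero =>
      rw [iterate_zero_apply, iterate_succ_apply'] at h
      exact absurd (h ▸ hg.1.mapsTo (hg.iterate_mem_of_succ_ne_zero hne)) ho'
    | succ m' =>
      have hm := hg.iterate_mem_of_succ_ne_zero hne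
      have hm' := hg.iterate_mem_of_succ_ne_zero (h ▸ hne)
      rw [iterate_succ_apply', iterate_succ_apply'] at h
      exact ih (hg.1.injOn hm hm' h) (ne_of_mem_of_not_mem hm h0)

end IsArcMap

section OfArcMap

variable {N : ℕ} {L R : Finset ℕ} {g : ℕ → ℕ}

open Classical in
noncomputable def arcChain (N : ℕ) (g : ℕ → ℕ) (o : ℕ) : Finset ℕ :=
  (Icc 1 N).filter fun y => ∃ m, g^[m] o = y

lemma mem_arcChain {o y : ℕ} : y ∈ arcChain N g o ↔ y ∈ Icc 1 N ∧ ∃ m, g^[m] o = y := by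
  simp [arcChain]

lemma zero_notMem_of_subset_Icc (hL : L ⊆ Icc 1 N) : 0 ∉ L := fun h => by
  simpa using hL h

noncomputable def ofArcMap (hg : IsArcMap L R g) (hL : L ⊆ Icc 1 N) : Finpartition (Icc 1 N) where
  parts := (Icc 1 N \ R).image (arcChain N g)
  supIndep := by
    rw [supIndep_iff_pairwiseDisjoint]
    rintro _ hB _ hB' hne
    obtain ⟨o, ho, rfl⟩ := mem_image.1 hB
    obtain ⟨o', ho', rfl⟩ := mem_image.1 hB'
    refine disjoint_left.2 fun y hy hy' => hne ?_
    obtain ⟨hyI, m, rfl⟩ := mem_arcChain.1 hy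
    obtain ⟨-, m', hm'⟩ := mem_arcChain.1 hy'
    rw [hg.eq_of_iterate_eq (zero_notMem_of_subset_Icc hL) (mem_sdiff.1 ho).2
      (mem_sdiff.1 ho').2 hm'.symm (by simp at hyI; omega)]
  sup_parts := by
    refine le_antisymm (Finset.sup_le fun B hB => ?_) fun y hy => ?_
    · obtain ⟨o, -, rfl⟩ := mem_image.1 hB
      exact fun y hy => (mem_arcChain.1 hy).1
    · obtain ⟨o, ho, m, rfl⟩ := hg.exists_iterate_eq hL hy
      exact mem_sup.2 ⟨_, mem_image_of_mem _ ho, mem_arcChain.2 ⟨hy, m, rfl⟩⟩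
  bot_notMem := by
    rintro hB
    obtain ⟨o, ho, h⟩ := mem_image.1 hB
    have : o ∈ arcChain N g o := mem_arcChain.2 ⟨(mem_sdiff.1 ho).1, 0, rfl⟩
    simp [h] at this

lemma mem_spArcs_ofArcMap (hg : IsArcMap L R g) (hL : L ⊆ Icc 1 N) (hR : R ⊆ Icc 1 N)
    {a b : ℕ} : (a, b) ∈ spArcs (ofArcMap hg hL) ↔ a ∈ L ∧ g a = b := by
  have h0 := zero_notMem_of_subset_Icc hL
  have hI0 : ∀ {y}, y ∈ Icc 1 N → y ≠ 0 := fun hy => by simp at hy; omega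
  rw [mem_spArcs]
  constructor
  · rintro ⟨-, hab, B, hB, haB, hbB, hbtw⟩
    obtain ⟨o, -, rfl⟩ := mem_image.1 hB
    obtain ⟨haI, p, rfl⟩ := mem_arcChain.1 haB
    obtain ⟨hbI, q, rfl⟩ := mem_arcChain.1 hbB
    have hpq : p < q := by
      by_contra! hqp
      exact (hg.iterate_le_iterate h0 (hI0 haI) hqp).not_gt hab
    obtain hq | hq := (Nat.succ_le_of_lt hpq).lt_or_eq
    · have hmem := hg.iterate_mem_of_lt h0 (hI0 hbI) hq
      have hc : g^[p + 1] o ≠ 0 := ne_of_mem_of_not_mem hmem h0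
      exact absurd ⟨hg.iterate_lt_iterate h0 hc (Nat.lt_succ_self p),
        hg.iterate_lt_iterate h0 (hI0 hbI) hq⟩
        (hbtw _ (mem_arcChain.2 ⟨hL hmem, p + 1, rfl⟩))
    · subst hq
      exact ⟨hg.iterate_mem_of_succ_ne_zero (hI0 hbI), (iterate_succ_apply' g p o).symm⟩
  · rintro ⟨ha, rfl⟩
    have haI := hL ha
    have hbI := hR (hg.1.mapsTo ha)
    obtain ⟨o, ho, m, rfl⟩ := hg.exists_iterate_eq hL haI
    rw [← iterate_succ_apply' g m o] at hbI ⊢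
    refine ⟨⟨haI, hbI⟩, hg.iterate_lt_iterate h0 (hI0 hbI) (Nat.lt_succ_self m), arcChain N g o,
      mem_image_of_mem _ ho, mem_arcChain.2 ⟨haI, m, rfl⟩, mem_arcChain.2 ⟨hbI, m + 1, rfl⟩, ?_⟩
    rintro c hc ⟨hac, hcb⟩
    obtain ⟨hcI, p, rfl⟩ := mem_arcChain.1 hc
    rcases le_or_gt p m with hpm | hmp
    · exact (hg.iterate_le_iterate h0 (hI0 haI) hpm).not_gt hac
    · exact (hg.iterate_le_iterate h0 (hI0 hcI) hmp).not_gt hcb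

lemma image_fst_spArcs_ofArcMap (hg : IsArcMap L R g) (hL : L ⊆ Icc 1 N) (hR : R ⊆ Icc 1 N) :
    (spArcs (ofArcMap hg hL)).image Prod.fst = L := by
  ext a
  simp only [mem_image_fst_spArcs, mem_spArcs_ofArcMap hg hL hR, exists_and_left, exists_eq',
    and_true]

lemma image_snd_spArcs_ofArcMap (hg : IsArcMap L R g) (hL : L ⊆ Icc 1 N) (hR : R ⊆ Icc 1 N) :
    (spArcs (ofArcMap hg hL)).image Prod.snd = R := by
  ext b
  simp only [mem_image, Prod.exists, mem_spArcs_ofArcMap hg hL hR, exists_eq_right]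
  exact ⟨fun ⟨a, ha, hab⟩ => hab ▸ hg.1.mapsTo ha, fun hb => hg.1.surjOn hb⟩

lemma arcSucc_ofArcMap (hg : IsArcMap L R g) (hL : L ⊆ Icc 1 N) (hR : R ⊆ Icc 1 N) :
    arcSucc (ofArcMap hg hL) = g := by
  funext x
  by_cases hx : x ∈ L
  · exact arcSucc_eq ((mem_spArcs_ofArcMap hg hL hR).2 ⟨hx, rfl⟩)
  · rw [hg.2.2 x hx]
    exact arcSucc_eq_zero (by rwa [image_fst_spArcs_ofArcMap hg hL hR])

end OfArcMap

section ArcSucc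

variable {N : ℕ} {P : Finpartition (Icc 1 N)} {B : Finset ℕ}

lemma min'_notMem_image_snd_spArcs (hB : B ∈ P.parts) (hne : B.Nonempty) :
    B.min' hne ∉ (spArcs P).image Prod.snd := by
  intro h
  obtain ⟨⟨x, y⟩, harc, rfl⟩ := mem_image.1 h
  have hxB := (mem_part_iff_of_mem_spArcs hB harc).2 (B.min'_mem hne)
  exact (B.min'_le x hxB).not_gt (mem_spArcs.1 harc).2.1

lemma eq_arcChain_min' (hB : B ∈ P.parts) (hne : B.Nonempty) :
    B = arcChain N (arcSucc P) (B.min' hne) := by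
  have h0 := zero_notMem_of_subset_Icc (image_fst_spArcs_subset P)
  ext y
  rw [mem_arcChain]
  constructor
  · intro hy
    refine ⟨P.le hB hy, ?_⟩
    induction y using Nat.strong_induction_on with
    | _ y ih =>
      obtain hmin | hlt := (B.min'_le y hy).eq_or_lt
      · exact ⟨0, hmin⟩
      · obtain ⟨x, hx, harc⟩ := exists_mem_spArcs_of_lt hB hy (B.min'_mem hne) hlt
        obtain ⟨m, hm⟩ := ih x (mem_spArcs.1 harc).2.1 hx
        exact ⟨m + 1, by rw [iterate_succ_apply', hm, arcSucc_eq harc]⟩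
  · rintro ⟨hyI, m, rfl⟩
    have hyne : (arcSucc P)^[m] (B.min' hne) ≠ 0 := by simp at hyI; omega
    clear hyI
    induction m with
    | zero => exact B.min'_mem hne
    | succ m ih =>
      have hm := (isArcMap_arcSucc P).iterate_mem_of_succ_ne_zero hyne
      rw [iterate_succ_apply']
      exact (mem_part_iff_of_mem_spArcs hB (mem_spArcs_iff_arcSucc.2 ⟨hm, rfl⟩)).1
        (ih (ne_of_mem_of_not_mem hm h0))

theorem ofArcMap_arcSucc (P : Finpartition (Icc 1 N)) :
    ofArcMap (isArcMap_arcSucc P) (image_fst_spArcs_subset P) = P := by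
  have hg := isArcMap_arcSucc P
  have h0 := zero_notMem_of_subset_Icc (image_fst_spArcs_subset P)
  ext B
  change B ∈ (Icc 1 N \ (spArcs P).image Prod.snd).image (arcChain N (arcSucc P)) ↔ _
  constructor
  · rintro hB
    obtain ⟨o, ho, rfl⟩ := mem_image.1 hB
    obtain ⟨hoI, hoR⟩ := mem_sdiff.1 ho
    obtain ⟨B, hB, hoB⟩ := P.exists_mem hoI
    have hne : B.Nonempty := ⟨o, hoB⟩
    have hBeq := eq_arcChain_min' hB hne
    obtain ⟨-, m, hm⟩ := mem_arcChain.1 (hBeq ▸ hoB)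
    have : B.min' hne = o := hg.eq_of_iterate_eq h0
      (min'_notMem_image_snd_spArcs hB hne) hoR (m' := 0) hm (by rw [hm]; simp at hoI; omega)
    rwa [← this, ← hBeq]
  · intro hB
    have hne := P.nonempty_of_mem_parts hB
    rw [eq_arcChain_min' hB hne]
    exact mem_image_of_mem _
      (mem_sdiff.2 ⟨P.le hB (B.min'_mem hne), min'_notMem_image_snd_spArcs hB hne⟩)

end ArcSucc

theorem card_vtype_eq_vtypeOf {N : ℕ} {L R : Finset ℕ} (hL : L ⊆ Icc 1 N) (hR : R ⊆ Icc 1 N) :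
    Nat.card {P : Finpartition (Icc 1 N) // ∀ i ∈ Icc 1 N, vtype P i = vtypeOf L R i} =
      Nat.card {g : ℕ → ℕ // IsArcMap L R g} := by
  refine Nat.card_congr
    { toFun := fun P => ⟨arcSucc P.1, ?_⟩
      invFun := fun g => ⟨ofArcMap g.2 hL, (forall_vtype_eq_vtypeOf_iff hL hR _).2
        ⟨image_fst_spArcs_ofArcMap g.2 hL hR, image_snd_spArcs_ofArcMap g.2 hL hR⟩⟩
      left_inv := fun P => Subtype.ext ?_
      right_inv := fun g => Subtype.ext (arcSucc_ofArcMap g.2 hL hR) }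
  · obtain ⟨P, hP⟩ := P
    obtain ⟨rfl, rfl⟩ := (forall_vtype_eq_vtypeOf_iff hL hR _).1 hP
    exact isArcMap_arcSucc P
  · obtain ⟨P, hP⟩ := P
    obtain ⟨rfl, rfl⟩ := (forall_vtype_eq_vtypeOf_iff hL hR _).1 hP
    exact ofArcMap_arcSucc P

section Counting

variable {s : Finset ℕ} {a : ℕ}

def arcChoices (L R : Finset ℕ) (x : ℕ) : ℕ := #{r ∈ R | x < r} - #{y ∈ L | x < y}

instance (L R : Finset ℕ) : Finite {g : ℕ → ℕ // IsArcMap L R g} := by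
  refine Finite.of_injective (fun g : {g // IsArcMap L R g} => fun x : L =>
    (⟨g.1 x, g.2.1.mapsTo x.2⟩ : R)) fun g g' h => Subtype.ext (funext fun x => ?_)
  by_cases hx : x ∈ L
  · exact congrArg Subtype.val (congrFun h ⟨x, hx⟩)
  · rw [g.2.2.2 x hx, g'.2.2.2 x hx]

lemma isArcMap_insert_iff {R : Finset ℕ} {g : ℕ → ℕ} (ha : a ∉ s) :
    IsArcMap (insert a s) R g ↔ g a ∈ R ∧ a < g a ∧ IsArcMap s (R.erase (g a)) (update g a 0) := by
  have hEq : Set.EqOn (update g a 0) g s := fun x hx =>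
    update_of_ne (ne_of_mem_of_not_mem hx ha) _ _
  have hbij : g a ∈ R → (Set.BijOn g ↑(insert a s) R ↔ Set.BijOn g s ↑(R.erase (g a))) := by
    intro hgaR
    have hR : (R : Set ℕ) = insert (g a) ↑(R.erase (g a)) := by simp [hgaR]
    rw [coe_insert, hR, Set.BijOn.insert_iff (by simpa using ha) (by simp)]
  constructor
  · rintro ⟨hg, hlt, hzero⟩
    have hgaR : g a ∈ R := hg.mapsTo (by simp)
    refine ⟨hgaR, hlt a (mem_insert_self a s), ((hbij hgaR).1 hg).congr hEq.symm,
      fun x hx => hEq hx ▸ hlt x (mem_insert_of_mem hx), fun x hx => ?_⟩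
    rcases eq_or_ne x a with rfl | hxa
    · exact update_self _ _ _
    · rw [update_of_ne hxa]
      exact hzero x (by simp [hxa, hx])
  · rintro ⟨hgaR, hlta, hg, hlt, hzero⟩
    refine ⟨(hbij hgaR).2 (hg.congr hEq), fun x hx => ?_, fun x hx => ?_⟩
    · rcases mem_insert.1 hx with rfl | hx
      · exact hlta
      · exact hEq hx ▸ hlt x hx
    · rw [mem_insert, not_or] at hx
      simpa [update_of_ne hx.1] using hzero x hx.2

def arcMapInsertEquiv (ha : a ∉ s) (R : Finset ℕ) :
    {g // IsArcMap (insert a s) R g} ≃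
      Σ r : {r // r ∈ R.filter (a < ·)}, {g // IsArcMap s (R.erase r) g} where
  toFun g :=
    have h := (isArcMap_insert_iff ha).1 g.2
    ⟨⟨g.1 a, mem_filter.2 ⟨h.1, h.2.1⟩⟩, ⟨update g.1 a 0, h.2.2⟩⟩
  invFun rg := ⟨update rg.2.1 a rg.1.1, by
    have hr := mem_filter.1 rg.1.2
    have hupd : update (update rg.2.1 a rg.1.1) a 0 = rg.2.1 := by
      rw [update_idem, ← rg.2.2.2.2 a ha, update_eq_self]
    rw [isArcMap_insert_iff ha, update_self, hupd]
    exact ⟨hr.1, hr.2, rg.2.2⟩⟩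
  left_inv g := Subtype.ext (by simp)
  right_inv rg := Sigma.subtype_ext (Subtype.ext (update_self _ _ _)) (by
    simp only [update_idem]
    rw [← rg.2.2.2.2 a ha, update_eq_self])

/-- When the images are chosen from the largest left endpoint down, the larger left endpoints
`y > x` have already used up right endpoints `g y > y > x`. -/
theorem card_isArcMap (L R : Finset ℕ) (h : #L = #R) :
    Nat.card {g // IsArcMap L R g} = ∏ x ∈ L, arcChoices L R x := by
  unfold arcChoices
  induction L using Finset.induction_on_max generalizing R with
  | empty =>
    obtain rfl : R = ∅ := card_eq_zero.1 (by simpa using h.symm)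
    rw [prod_empty, Nat.card_eq_one_iff_exists]
    refine ⟨⟨0, by simp [IsArcMap]⟩, fun g => Subtype.ext (funext fun x => ?_)⟩
    exact g.2.2.2 x (notMem_empty x)
  | insert a s hmax ih =>
    have ha : a ∉ s := fun has => (hmax a has).false
    rw [Nat.card_congr (arcMapInsertEquiv ha R), Nat.card_sigma, prod_insert ha]
    have hfactor : ∀ r : {r // r ∈ R.filter (a < ·)},
        Nat.card {g // IsArcMap s (R.erase r) g} =
          ∏ x ∈ s, (#{r ∈ R | x < r} - #{y ∈ insert a s | x < y}) := by
      rintro ⟨r, hr⟩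
      have hr := mem_filter.1 hr
      rw [ih _ (by rw [card_erase_of_mem hr.1, ← h, card_insert_of_notMem ha]; rfl)]
      refine prod_congr rfl fun x hx => ?_
      have hxr : r ∈ R.filter (x < ·) := mem_filter.2 ⟨hr.1, (hmax x hx).trans hr.2⟩
      rw [filter_erase, card_erase_of_mem hxr, filter_insert, if_pos (hmax x hx),
        card_insert_of_notMem (by simp [ha]), Nat.sub_sub, add_comm]
    have htop : #{y ∈ insert a s | a < y} = 0 := by
      rw [card_eq_zero, filter_eq_empty_iff]
      intro y hy
      rcases mem_insert.1 hy with rfl | hy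
      · exact lt_irrefl y
      · exact (hmax y hy).not_gt
    simp only [hfactor, sum_const, card_univ, Fintype.card_coe, smul_eq_mul, htop, Nat.sub_zero]

end Counting

lemma choose_mul_factorial_mul_add_choose_succ_mul_factorial (n m : ℕ) :
    (n + m).choose m * m ! * m + (n + m).choose (m + 1) * (m + 1)! =
      (n + m) * (n + m).descFactorial m := by
  have h1 := Nat.descFactorial_eq_factorial_mul_choose (n + m) m
  have h2 := Nat.descFactorial_eq_factorial_mul_choose (n + m) (m + 1)
  rw [Nat.descFactorial_succ, Nat.add_sub_cancel] at h2
  calc (n + m).choose m * m ! * m + (n + m).choose (m + 1) * (m + 1)!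
      = (n + m).descFactorial m * m + n * (n + m).descFactorial m := by rw [h2, h1]; ring
    _ = (n + m) * (n + m).descFactorial m := by ring

lemma card_filter_lt_Icc_union {a b c d : ℕ} (hbc : b < c) (x : ℕ) :
    #{r ∈ Icc a b ∪ Icc c d | x < r} = (b + 1 - max a (x + 1)) + (d + 1 - max c (x + 1)) := by
  have hIcc : ∀ a b : ℕ, (Icc a b).filter (x < ·) = Icc (max a (x + 1)) b := fun a b => by
    ext y
    simp only [mem_filter, mem_Icc, max_le_iff]
    omega
  rw [filter_union, hIcc, hIcc, card_union_of_disjoint, Nat.card_Icc, Nat.card_Icc]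
  exact disjoint_left.2 fun y hy hy' => by simp only [mem_Icc] at hy hy'; omega

section TwoTransitories

variable (n k j : ℕ)

def leftEnds : Finset ℕ := Icc 1 (n + k + 1) ∪ Icc (n + 2 * k + 2) (n + 2 * k + j + 2)

def rightEnds : Finset ℕ :=
  Icc (n + k + 1) (n + 2 * k + 1) ∪ Icc (n + 2 * k + j + 2) (2 * (n + k + j) + 2)

variable {n k j} in
lemma mem_leftEnds {x : ℕ} :
    x ∈ leftEnds n k j ↔ (1 ≤ x ∧ x ≤ n + k + 1) ∨ (n + 2 * k + 2 ≤ x ∧ x ≤ n + 2 * k + j + 2) := by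
  simp [leftEnds]

variable {n k j} in
lemma mem_rightEnds {x : ℕ} : x ∈ rightEnds n k j ↔
    (n + k + 1 ≤ x ∧ x ≤ n + 2 * k + 1) ∨ (n + 2 * k + j + 2 ≤ x ∧ x ≤ 2 * (n + k + j) + 2) := by
  simp [rightEnds]

lemma leftEnds_subset : leftEnds n k j ⊆ Icc 1 (2 * (n + k + j) + 2) := fun x hx => by
  rw [mem_leftEnds] at hx
  rw [mem_Icc]
  omega

lemma rightEnds_subset : rightEnds n k j ⊆ Icc 1 (2 * (n + k + j) + 2) := fun x hx => by
  rw [mem_rightEnds] at hx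
  rw [mem_Icc]
  omega

lemma card_leftEnds_eq_card_rightEnds : #(leftEnds n k j) = #(rightEnds n k j) := by
  have hdisj : ∀ {a b c d : ℕ}, b < c → Disjoint (Icc a b) (Icc c d) := fun hbc =>
    disjoint_left.2 fun y hy hy' => by simp only [mem_Icc] at hy hy'; omega
  rw [leftEnds, rightEnds, card_union_of_disjoint (hdisj (by omega)),
    card_union_of_disjoint (hdisj (by omega))]
  simp only [Nat.card_Icc]
  omega

lemma vtype_pattern_iff_vtypeOf_ends (P : Finpartition (Icc 1 (2 * (n + k + j) + 2))) :
    ((∀ i ∈ Icc (1 : ℕ) (2 * (n + k + j) + 2), vtype P i ≠ VType.fixedpt) ∧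
      (∀ i ∈ Icc (1 : ℕ) (n + k), vtype P i = VType.opener) ∧
      vtype P (n + k + 1) = VType.transitory ∧
      (∀ i ∈ Icc (n + k + 2) (n + 2 * k + 1), vtype P i = VType.closer) ∧
      (∀ i ∈ Icc (n + 2 * k + 2) (n + 2 * k + j + 1), vtype P i = VType.opener) ∧
      vtype P (n + 2 * k + j + 2) = VType.transitory ∧
      (∀ i ∈ Icc (n + 2 * k + j + 3) (2 * (n + k + j) + 2), vtype P i = VType.closer)) ↔
    ∀ i ∈ Icc 1 (2 * (n + k + j) + 2),
      vtype P i = vtypeOf (leftEnds n k j) (rightEnds n k j) i := by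
  constructor
  · rintro ⟨-, hopen, htrans, hclose, hopen', htrans', hclose'⟩ i hi
    rw [mem_Icc] at hi
    unfold vtypeOf
    simp only [mem_leftEnds, mem_rightEnds]
    split_ifs with hL hR hR
    · obtain rfl | rfl : i = n + k + 1 ∨ i = n + 2 * k + j + 2 := by omega
      exacts [htrans, htrans']
    · obtain h | h : i ≤ n + k ∨ n + 2 * k + 2 ≤ i ∧ i ≤ n + 2 * k + j + 1 := by omega
      exacts [hopen i (mem_Icc.2 ⟨hi.1, h⟩), hopen' i (mem_Icc.2 h)]
    · obtain h | h : i ≤ n + 2 * k + 1 ∨ n + 2 * k + j + 3 ≤ i := by omega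
      exacts [hclose i (mem_Icc.2 ⟨by omega, h⟩), hclose' i (mem_Icc.2 ⟨h, hi.2⟩)]
    · omega
  · intro h
    refine ⟨fun i hi => ?_, fun i hi => ?_, ?_, fun i hi => ?_, fun i hi => ?_, ?_, fun i hi => ?_⟩
    all_goals
      try rw [mem_Icc] at hi
      rw [h _ (mem_Icc.2 (by omega))]
      unfold vtypeOf
      simp only [mem_leftEnds, mem_rightEnds]
      split_ifs <;> first | rfl | decide | omega

lemma arcChoices_ends {x : ℕ} (hx : x ∈ leftEnds n k j) :
    arcChoices (leftEnds n k j) (rightEnds n k j) x =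
      if x ≤ n + k then x else if x = n + k + 1 then n + k
      else if x ≤ n + 2 * k + j + 1 then x - (2 * k + 1) else n + j := by
  rw [mem_leftEnds] at hx
  rw [arcChoices, leftEnds, rightEnds, card_filter_lt_Icc_union (by omega),
    card_filter_lt_Icc_union (by omega)]
  split_ifs <;> omega

lemma prod_arcChoices_ends :
    ∏ x ∈ leftEnds n k j, arcChoices (leftEnds n k j) (rightEnds n k j) x =
      (n + k) ! * (n + k) * ((n + j).descFactorial j * (n + j)) := by
  rw [prod_congr rfl fun x hx => arcChoices_ends n k j hx, leftEnds,
    prod_union (disjoint_left.2 fun y hy hy' => by simp only [mem_Icc] at hy hy'; omega),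
    prod_Icc_succ_top (by omega), show n + 2 * k + j + 2 = n + 2 * k + j + 1 + 1 by omega,
    prod_Icc_succ_top (by omega), ← Ico_add_one_right_eq_Icc, ← Ico_add_one_right_eq_Icc,
    prod_Ico_eq_prod_range, prod_Ico_eq_prod_range, ← prod_Ico_id_eq_factorial,
    prod_Ico_eq_prod_range, Nat.add_descFactorial_eq_ascFactorial, Nat.ascFactorial_eq_prod_range]
  simp only [show n + k + 1 - 1 = n + k by omega,
    show n + 2 * k + j + 1 + 1 - (n + 2 * k + 2) = j by omega]
  refine congrArg₂ (· * ·) (congrArg₂ (· * ·) (prod_congr rfl fun x hx => ?_) ?_)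
    (congrArg₂ (· * ·) (prod_congr rfl fun x hx => ?_) ?_)
  all_goals
    try rw [mem_range] at hx
    split_ifs <;> omega

end TwoTransitories

theorem stmt11_general (n k j : ℕ) :
    Nat.card {P : Finpartition (Finset.Icc (1 : ℕ) (2 * (n + k + j) + 2)) //
      (∀ i ∈ Finset.Icc (1 : ℕ) (2 * (n + k + j) + 2), vtype P i ≠ VType.fixedpt) ∧
      (∀ i ∈ Finset.Icc (1 : ℕ) (n + k), vtype P i = VType.opener) ∧
      vtype P (n + k + 1) = VType.transitory ∧
      (∀ i ∈ Finset.Icc (n + k + 2) (n + 2 * k + 1), vtype P i = VType.closer) ∧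
      (∀ i ∈ Finset.Icc (n + 2 * k + 2) (n + 2 * k + j + 1), vtype P i = VType.opener) ∧
      vtype P (n + 2 * k + j + 2) = VType.transitory ∧
      (∀ i ∈ Finset.Icc (n + 2 * k + j + 3) (2 * (n + k + j) + 2),
        vtype P i = VType.closer)} =
    n.factorial *
      ((n + k).choose k * k.factorial * k + (n + k).choose (k + 1) * (k + 1).factorial) *
      ((n + j).choose j * j.factorial * j + (n + j).choose (j + 1) * (j + 1).factorial) := by
  rw [Nat.card_congr (Equiv.subtypeEquivRight (vtype_pattern_iff_vtypeOf_ends n k j)),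
    card_vtype_eq_vtypeOf (leftEnds_subset n k j) (rightEnds_subset n k j),
    card_isArcMap _ _ (card_leftEnds_eq_card_rightEnds n k j), prod_arcChoices_ends,
    choose_mul_factorial_mul_add_choose_succ_mul_factorial,
    choose_mul_factorial_mul_add_choose_succ_mul_factorial,
    ← Nat.factorial_mul_descFactorial (Nat.le_add_left k n), Nat.add_sub_cancel]
  ring

theorem stmt11 (n k j : ℕ) (hn : 1 ≤ n) :
    Nat.card {P : Finpartition (Finset.Icc (1 : ℕ) (2 * (n + k + j) + 2)) //
      (∀ i ∈ Finset.Icc (1 : ℕ) (2 * (n + k + j) + 2), vtype P i ≠ VType.fixedpt) ∧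
      (∀ i ∈ Finset.Icc (1 : ℕ) (n + k), vtype P i = VType.opener) ∧
      vtype P (n + k + 1) = VType.transitory ∧
      (∀ i ∈ Finset.Icc (n + k + 2) (n + 2 * k + 1), vtype P i = VType.closer) ∧
      (∀ i ∈ Finset.Icc (n + 2 * k + 2) (n + 2 * k + j + 1), vtype P i = VType.opener) ∧
      vtype P (n + 2 * k + j + 2) = VType.transitory ∧
      (∀ i ∈ Finset.Icc (n + 2 * k + j + 3) (2 * (n + k + j) + 2),
        vtype P i = VType.closer)} =
    n.factorial *
      ((n + k).choose k * k.factorial * k + (n + k).choose (k + 1) * (k + 1).factorial) *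
      ((n + j).choose j * j.factorial * j + (n + j).choose (j + 1) * (j + 1).factorial) :=
  stmt11_general n k j
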